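/- For all positive integers a and i, the polynomial P(q) = [3a+i choose a+i]_q − [3a+2i choose a]_q has non-negative coefficients. Equivalently, for all integers 0 < a < b, the Gaussian polynomial inequality [b+2a choose b]_q ≥ [a+2b choose a]_q holds coefficientwise (the β = 2 case of the β-Conjecture). -/

import Mathlib

open Finset Polynomial

/-- The Gaussian binomial coefficient `[n choose k]_q`, i.e. the q-binomial
coefficient `[n]!_q / ([k]!_q [n-k]!_q)`, as a polynomial in `q` with integer
coefficients, defined via the q-Pascal recurrence. It is `0` when `k > n`. -/
noncomputable def qbinom : ℕ → ℕ → Polynomial ℤ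
  | _, 0 => 1
  | 0, _ + 1 => 0
  | n + 1, k + 1 => qbinom n k + Polynomial.X ^ (k + 1) * qbinom n (k + 1)
  termination_by n k => (n, k)

lemma qb_zero (n : ℕ) : qbinom n 0 = 1 := by cases n <;> simp [qbinom]
lemma qb_zs (k : ℕ) : qbinom 0 (k+1) = 0 := by simp [qbinom]
lemma qb_ss (n k : ℕ) : qbinom (n+1) (k+1) = qbinom n k + X^(k+1) * qbinom n (k+1) := by
  simp [qbinom]

lemma qb_of_lt : ∀ n k, n < k → qbinom n k = 0 := by
  intro n
  induction n with
  | zero =>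
    intro k h
    rcases k with _|k
    · omega
    · exact qb_zs k
  | succ n ih =>
    intro k h
    rcases k with _|k
    · omega
    · rw [qb_ss, ih k (by omega), ih (k+1) (by omega)]; ring

lemma qb_self : ∀ n, qbinom n n = 1 := by
  intro n
  induction n with
  | zero => exact qb_zero 0
  | succ n ih => rw [qb_ss, ih, qb_of_lt n (n+1) (by omega)]; ring

def NN (p : Polynomial ℤ) : Prop := ∀ m, 0 ≤ p.coeff m

lemma nn_zero : NN 0 := fun m => by simp
lemma nn_add {p q : Polynomial ℤ} (hp : NN p) (hq : NN q) : NN (p + q) := fun m => by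
  rw [coeff_add]; exact add_nonneg (hp m) (hq m)
lemma nn_mul {p q : Polynomial ℤ} (hp : NN p) (hq : NN q) : NN (p * q) := fun m => by
  rw [coeff_mul]
  exact Finset.sum_nonneg fun x _ => mul_nonneg (hp x.1) (hq x.2)
lemma nn_X_pow (e : ℕ) : NN ((X : Polynomial ℤ)^e) := fun m => by
  rw [coeff_X_pow]; positivity
lemma nn_of_eq {p q : Polynomial ℤ} (h : p = q) (hq : NN q) : NN p := h ▸ hq
lemma nn_sum {s : Finset ℕ} {f : ℕ → Polynomial ℤ} (h : ∀ i ∈ s, NN (f i)) :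
    NN (∑ i ∈ s, f i) := fun m => by
  rw [finset_sum_coeff]
  exact Finset.sum_nonneg fun i hi => h i hi m

lemma qb_nn : ∀ n k, NN (qbinom n k) := by
  intro n
  induction n with
  | zero =>
    intro k
    rcases k with _|k
    · rw [qb_zero]; intro m; simp [coeff_one]; positivity
    · rw [qb_zs]; exact nn_zero
  | succ n ih =>
    intro k
    rcases k with _|k
    · rw [qb_zero]; intro m; simp [coeff_one]; positivity
    · rw [qb_ss]; exact nn_add (ih k) (nn_mul (nn_X_pow (k+1)) (ih (k+1)))

noncomputable def gs (n : ℕ) : Polynomial ℤ := ∑ i ∈ Finset.range n, X^i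

noncomputable def qfact : ℕ → Polynomial ℤ
  | 0 => 1
  | n+1 => qfact n * gs (n+1)

lemma qfact_zero : qfact 0 = 1 := rfl
lemma qfact_succ (n : ℕ) : qfact (n+1) = qfact n * gs (n+1) := rfl

lemma gs_add (a b : ℕ) : gs (a+b) = gs a + X^a * gs b := by
  unfold gs
  rw [Finset.sum_range_add, Finset.mul_sum]
  congr 1
  exact Finset.sum_congr rfl fun i _ => by rw [pow_add]

lemma gs_monic (n : ℕ) : (gs (n+1)).Monic := by
  have : gs (n+1) = X^n + gs n := by
    unfold gs; rw [Finset.sum_range_succ]; ring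
  rw [this]
  apply Polynomial.monic_X_pow_add
  · unfold gs
    apply lt_of_le_of_lt (Polynomial.degree_sum_le _ _)
    rw [Finset.sup_lt_iff]
    · intro i hi
      simpa [Polynomial.degree_X_pow] using by
        exact_mod_cast (Nat.cast_lt (α := WithBot ℕ)).mpr (Finset.mem_range.mp hi)
    · exact_mod_cast WithBot.bot_lt_coe n

lemma qfact_monic : ∀ n, (qfact n).Monic := by
  intro n
  induction n with
  | zero => exact monic_one
  | succ n ih => exact ih.mul (gs_monic n)

lemma qfact_ne_zero (n : ℕ) : qfact n ≠ 0 := (qfact_monic n).ne_zero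

lemma fact_mul : ∀ N a b, a + b ≤ N → qbinom (a+b) a * (qfact a * qfact b) = qfact (a+b) := by
  intro N
  induction N with
  | zero => intro a b h
            have ha : a = 0 ∧ b = 0 := by omega
            rcases ha with ⟨rfl, rfl⟩
            simp [qb_zero, qfact_zero]
  | succ N ih =>
    intro a b h
    rcases a with _|a
    · simp [qb_zero, qfact_zero]
    rcases b with _|b
    · simp [qb_self, qfact_zero]
    have key : qbinom (a+1+(b+1)) (a+1) = qbinom (a+(b+1)) a + X^(a+1) * qbinom (a+(b+1)) (a+1) := by
      have : a+1+(b+1) = (a+(b+1))+1 := by omega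
      rw [this, qb_ss]
    rw [key, add_mul]
    have h1 : qbinom (a+(b+1)) a * (qfact (a+1) * qfact (b+1)) =
        gs (a+1) * qfact (a+(b+1)) := by
      rw [qfact_succ a]
      calc qbinom (a+(b+1)) a * (qfact a * gs (a+1) * qfact (b+1))
          = gs (a+1) * (qbinom (a+(b+1)) a * (qfact a * qfact (b+1))) := by ring
        _ = gs (a+1) * qfact (a+(b+1)) := by rw [ih a (b+1) (by omega)]
    have h2 : X^(a+1) * qbinom (a+(b+1)) (a+1) * (qfact (a+1) * qfact (b+1)) =
        X^(a+1) * gs (b+1) * qfact (a+(b+1)) := by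
      rw [qfact_succ b]
      have e : a+(b+1) = (a+1)+b := by omega
      calc X^(a+1) * qbinom (a+(b+1)) (a+1) * (qfact (a+1) * (qfact b * gs (b+1)))
          = X^(a+1) * gs (b+1) * (qbinom ((a+1)+b) (a+1) * (qfact (a+1) * qfact b)) := by rw [e]; ring
        _ = X^(a+1) * gs (b+1) * qfact ((a+1)+b) := by rw [ih (a+1) b (by omega)]
        _ = X^(a+1) * gs (b+1) * qfact (a+(b+1)) := by rw [← e]
    rw [h1, h2]
    have : a+1+(b+1) = (a+(b+1))+1 := by omega
    rw [this, qfact_succ (a+(b+1))]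
    have e2 : (a+(b+1))+1 = (a+1) + (b+1) := by omega
    rw [e2, gs_add (a+1) (b+1)]
    ring

lemma fact_mul' (a b : ℕ) : qbinom (a+b) a * (qfact a * qfact b) = qfact (a+b) :=
  fact_mul (a+b) a b le_rfl

lemma qb_symm (a b : ℕ) : qbinom (a+b) a = qbinom (a+b) b := by
  have h1 := fact_mul' a b
  have h2 := fact_mul' b a
  rw [Nat.add_comm b a] at h2
  have := h1.trans h2.symm
  have hne : qfact a * qfact b ≠ 0 := mul_ne_zero (qfact_ne_zero a) (qfact_ne_zero b)
  rcases mul_eq_mul_right_iff.mp (by rw [this] ; ring_nf : qbinom (a+b) a * (qfact a * qfact b) = qbinom (a+b) b * (qfact a * qfact b)) with h | h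
  · exact h
  · exact absurd h hne

lemma qb_mirror (n k : ℕ) : qbinom (n+1) (k+1) = X^(n-k) * qbinom n k + qbinom n (k+1) := by
  by_cases hk : k ≤ n
  swap
  · rw [qb_of_lt (n+1) (k+1) (by omega), qb_of_lt n k (by omega), qb_of_lt n (k+1) (by omega)]
    ring
  obtain ⟨c, rfl⟩ := Nat.le.dest hk
  have hsub : (k+c) - k = c := by omega
  rw [hsub]
  rcases c with _|c
  · simp only [Nat.add_zero]
    rw [qb_self, qb_of_lt k (k+1) (by omega), qb_self]; ring
  -- multiply-cancel by qfact (k+1) * qfact (c+1)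
  have hne : qfact (k+1) * qfact (c+1) ≠ 0 := mul_ne_zero (qfact_ne_zero _) (qfact_ne_zero _)
  apply mul_right_cancel₀ hne
  have eL : (k+(c+1))+1 = (k+1)+(c+1) := by omega
  have hL : qbinom ((k+(c+1))+1) (k+1) * (qfact (k+1) * qfact (c+1)) = qfact ((k+1)+(c+1)) := by
    rw [eL]; exact fact_mul' (k+1) (c+1)
  rw [hL]
  refine Eq.symm ?_
  have h1 : qbinom (k+(c+1)) k * (qfact (k+1) * qfact (c+1)) =
      gs (k+1) * qfact (k+(c+1)) := by
    rw [qfact_succ k]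
    calc qbinom (k+(c+1)) k * (qfact k * gs (k+1) * qfact (c+1))
        = gs (k+1) * (qbinom (k+(c+1)) k * (qfact k * qfact (c+1))) := by ring
      _ = gs (k+1) * qfact (k+(c+1)) := by rw [fact_mul' k (c+1)]
  have h2 : qbinom (k+(c+1)) (k+1) * (qfact (k+1) * qfact (c+1)) =
      gs (c+1) * qfact (k+(c+1)) := by
    rw [qfact_succ c]
    have e : k+(c+1) = (k+1)+c := by omega
    calc qbinom (k+(c+1)) (k+1) * (qfact (k+1) * (qfact c * gs (c+1)))
        = gs (c+1) * (qbinom ((k+1)+c) (k+1) * (qfact (k+1) * qfact c)) := by rw [e]; ring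
      _ = gs (c+1) * qfact ((k+1)+c) := by rw [fact_mul' (k+1) c]
      _ = gs (c+1) * qfact (k+(c+1)) := by rw [← e]
  calc (X^(c+1) * qbinom (k+(c+1)) k + qbinom (k+(c+1)) (k+1)) * (qfact (k+1) * qfact (c+1))
      = X^(c+1) * (qbinom (k+(c+1)) k * (qfact (k+1) * qfact (c+1)))
        + qbinom (k+(c+1)) (k+1) * (qfact (k+1) * qfact (c+1)) := by ring
    _ = X^(c+1) * (gs (k+1) * qfact (k+(c+1))) + gs (c+1) * qfact (k+(c+1)) := by rw [h1, h2]
    _ = (gs (c+1) + X^(c+1) * gs (k+1)) * qfact (k+(c+1)) := by ring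
    _ = gs ((c+1)+(k+1)) * qfact (k+(c+1)) := by rw [gs_add (c+1) (k+1)]
    _ = qfact ((k+1)+(c+1)) := by
        have e3 : (c+1)+(k+1) = (k+(c+1))+1 := by omega
        have e4 : (k+1)+(c+1) = (k+(c+1))+1 := by omega
        rw [e3, e4, qfact_succ]; ring

-- no internal zeros: coeff of qbinom (k+c) k at any m ≤ k*c is ≥ 1
lemma qb_niz : ∀ N k c m, k + c ≤ N → m ≤ k * c → 1 ≤ (qbinom (k+c) k).coeff m := by
  intro N
  induction N with
  | zero =>
    intro k c m h hm
    have : k = 0 ∧ c = 0 := by omega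
    rcases this with ⟨rfl, rfl⟩
    have : m = 0 := by omega
    subst this
    simp [qb_zero]
  | succ N ih =>
    intro k c m h hm
    rcases k with _|k
    · have : m = 0 := by omega
      subst this; simp [qb_zero]
    rcases c with _|c
    · have : m = 0 := by omega
      subst this; simp [Nat.add_zero, qb_self]
    have key : qbinom (k+1+(c+1)) (k+1) = qbinom (k+(c+1)) k + X^(k+1) * qbinom (k+(c+1)) (k+1) := by
      have e : k+1+(c+1) = (k+(c+1))+1 := by omega
      rw [e, qb_ss]
    rw [key, coeff_add]
    by_cases hm1 : m ≤ k * (c+1)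
    · have h1 := ih k (c+1) m (by omega) hm1
      have h2 := nn_mul (nn_X_pow (k+1)) (qb_nn (k+(c+1)) (k+1)) m
      omega
    · -- m > k*(c+1), so m ≥ k+1 and m-(k+1) ≤ (k+1)*c
      have hk1 : k+1 ≤ m := by nlinarith
      have hcoeff : (X^(k+1) * qbinom (k+(c+1)) (k+1)).coeff m
          = (qbinom (k+(c+1)) (k+1)).coeff (m - (k+1)) := by
        rw [coeff_X_pow_mul' ]
        · simp [hk1]
      have e2 : k+(c+1) = (k+1)+c := by omega
      have h1 : 1 ≤ (qbinom (k+(c+1)) (k+1)).coeff (m-(k+1)) := by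
        rw [e2]
        have hs : m - (k+1) + (k+1) = m := Nat.sub_add_cancel hk1
        exact ih (k+1) c (m-(k+1)) (by omega) (by nlinarith)
      have h2 := qb_nn (k+(c+1)) k m
      rw [hcoeff] at *
      omega

lemma pascal' (n k n' k' : ℕ) (hn : n = n'+1) (hk : k = k'+1) :
    qbinom n k = qbinom n' k' + X^k * qbinom n' k := by
  subst hn; subst hk; exact qb_ss n' k'

lemma mirror' (n k n' k' x : ℕ) (hn : n = n'+1) (hk : k = k'+1) (hx : x = n' - k') :
    qbinom n k = X^x * qbinom n' k' + qbinom n' k := by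
  subst hn; subst hk; subst hx; exact qb_mirror n' k'

lemma elem : ∀ N k c g e, 2*(2*k+c+g)+(k+c) ≤ N → e ≤ c*g →
    NN (qbinom (2*k+c+g) (k+c) - X^e * qbinom (2*k+c+g) k) := by
  intro N
  induction N with
  | zero =>
    intro k c g e h he
    have h0 : k = 0 ∧ c = 0 ∧ g = 0 := by omega
    rcases h0 with ⟨rfl, rfl, rfl⟩
    have : e = 0 := by omega
    subst this
    exact nn_of_eq (by simp) nn_zero
  | succ N ih =>
    intro k c g e h he
    rcases c with _|c
    · -- c = 0 : e = 0, difference is zero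
      have : e = 0 := by simpa using he
      subst this
      exact nn_of_eq (by simp) nn_zero
    rcases k with _|k
    · -- k = 0 : NIZ argument
      rw [show (0+(c+1)) = (c+1) from by omega]
      intro m
      rw [coeff_sub, qb_zero, mul_one, coeff_X_pow]
      by_cases hme : m = e
      · subst hme
        have h1 : 1 ≤ (qbinom ((c+1)+g) (c+1)).coeff m := qb_niz ((c+1)+g) (c+1) g m le_rfl (by omega)
        simp only [if_pos rfl]
        omega
      · rw [if_neg hme]
        have := qb_nn ((c+1)+g) (c+1) m
        simpa using this
    -- now k+1, c+1
    by_cases hcg : c + 1 ≤ g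
    · by_cases hce : c + 1 ≤ e
      · -- plain-plain Pascal
        obtain ⟨g', rfl⟩ : ∃ g', g = g'+1 := ⟨g-1, by omega⟩
        obtain ⟨e2, rfl⟩ : ∃ e2, e = (c+1)+e2 := ⟨e-(c+1), by omega⟩
        have p1 := pascal' (2*(k+1)+(c+1)+(g'+1)) ((k+1)+(c+1)) (2*k+(c+1)+(g'+1)+1) (k+(c+1))
          (by omega) (by omega)
        have p2 := pascal' (2*(k+1)+(c+1)+(g'+1)) (k+1) (2*k+(c+1)+(g'+1)+1) k
          (by omega) (by omega)
        rw [p1, p2]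
        have c1 := ih k (c+1) ((g'+1)+1) ((c+1)+e2) (by omega) (by nlinarith)
        have c2 := ih (k+1) (c+1) g' e2 (by omega) (by nlinarith)
        have e3 : 2*k+(c+1)+((g'+1)+1) = 2*k+(c+1)+(g'+1)+1 := by omega
        have e4 : 2*(k+1)+(c+1)+g' = 2*k+(c+1)+(g'+1)+1 := by omega
        rw [e3] at c1
        rw [e4] at c2
        refine nn_of_eq ?_ (nn_add c1 (nn_mul (nn_X_pow ((k+1)+(c+1))) c2))
        ring
      · -- mirror-mirror Pascal
        obtain ⟨g', rfl⟩ : ∃ g', g = g'+1 := ⟨g-1, by omega⟩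
        have p1 := mirror' (2*(k+1)+(c+1)+(g'+1)) ((k+1)+(c+1)) (2*k+(c+1)+(g'+1)+1) (k+(c+1))
          ((k+1)+(g'+1)) (by omega) (by omega) (by omega)
        have p2 := mirror' (2*(k+1)+(c+1)+(g'+1)) (k+1) (2*k+(c+1)+(g'+1)+1) k
          ((k+1)+(g'+1)+(c+1)) (by omega) (by omega) (by omega)
        rw [p1, p2]
        have c1 := ih k (c+1) ((g'+1)+1) (e+(c+1)) (by omega) (by nlinarith)
        have c2 := ih (k+1) (c+1) g' e (by omega) ?hb
        case hb =>
          rcases Nat.eq_zero_or_pos g' with h0|h0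
          · subst h0
            have : c = 0 := by omega
            subst this
            omega
          · have : c+1 ≤ (c+1)*g' := Nat.le_mul_of_pos_right _ h0
            omega
        have e3 : 2*k+(c+1)+((g'+1)+1) = 2*k+(c+1)+(g'+1)+1 := by omega
        have e4 : 2*(k+1)+(c+1)+g' = 2*k+(c+1)+(g'+1)+1 := by omega
        rw [e3] at c1
        rw [e4] at c2
        refine nn_of_eq ?_ (nn_add (nn_mul (nn_X_pow ((k+1)+(g'+1))) c1) c2)
        ring
    · -- symmetry: replace (k+1)+(c+1) by (k+1)+g
      have e1 : 2*(k+1)+(c+1)+g = ((k+1)+(c+1)) + ((k+1)+g) := by omega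
      have hsym : qbinom (2*(k+1)+(c+1)+g) ((k+1)+(c+1)) = qbinom (2*(k+1)+(c+1)+g) ((k+1)+g) := by
        rw [e1]; exact qb_symm ((k+1)+(c+1)) ((k+1)+g)
      rw [hsym]
      have c1 := ih (k+1) g (c+1) e (by omega) (by nlinarith)
      have e2 : 2*(k+1)+g+(c+1) = 2*(k+1)+(c+1)+g := by omega
      rw [e2] at c1
      exact c1

-- step lemmas for TOP
lemma nn_step_top (n k : ℕ) : NN (qbinom (n+1) k - qbinom n k) := by
  rcases k with _|k
  · exact nn_of_eq (by rw [qb_zero, qb_zero]; ring) nn_zero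
  · exact nn_of_eq (by rw [qb_mirror n k]; ring) (nn_mul (nn_X_pow (n-k)) (qb_nn n k))

lemma nn_trans {A B C : Polynomial ℤ} (h1 : NN (A - B)) (h2 : NN (B - C)) : NN (A - C) :=
  nn_of_eq (by ring) (nn_add h1 h2)

lemma top_mono : ∀ d n' k, NN (qbinom (n'+d) k - qbinom n' k) := by
  intro d
  induction d with
  | zero => intro n' k; exact nn_of_eq (by ring) nn_zero
  | succ d ih =>
    intro n' k
    exact nn_trans (nn_of_eq (by rw [show n'+(d+1) = (n'+d)+1 from rfl]) (nn_step_top (n'+d) k))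
      (ih n' k)

lemma nn_step_shift (n k : ℕ) : NN (qbinom (n+1) k - X^k * qbinom n k) := by
  rcases k with _|k
  · exact nn_of_eq (by rw [qb_zero, qb_zero]; ring) nn_zero
  · exact nn_of_eq (by rw [qb_ss n k]; ring) (qb_nn n k)

lemma top_pow : ∀ j n' k n, n'+j ≤ n → NN (qbinom n k - X^(k*j) * qbinom n' k) := by
  intro j
  induction j with
  | zero =>
    intro n' k n h
    obtain ⟨d, rfl⟩ := Nat.le.dest h
    exact nn_of_eq (by rw [Nat.mul_zero, pow_zero, one_mul, Nat.add_zero]) (top_mono d n' k)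
  | succ j ih =>
    intro n' k n h
    obtain ⟨n'', rfl⟩ : ∃ m, n = m+1 := ⟨n-1, by omega⟩
    have h1 : NN (qbinom (n''+1) k - X^k * qbinom n'' k) := nn_step_shift n'' k
    have h2 : NN (qbinom n'' k - X^(k*j) * qbinom n' k) := ih n' k n'' (by omega)
    have h3 : NN (X^k * (qbinom n'' k - X^(k*j) * qbinom n' k)) := nn_mul (nn_X_pow k) h2
    refine nn_of_eq ?_ (nn_add h1 h3)
    have : k*(j+1) = k + k*j := by ring
    rw [this, pow_add]
    ring

-- the identity at the tight base point
lemma tight_id (r u w : ℕ) :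
    qbinom (r+u+w) w * qbinom (r+u) r = qbinom (r+u+w) u * qbinom (r+w) r := by
  have hne : qfact r * qfact u * qfact w ≠ 0 :=
    mul_ne_zero (mul_ne_zero (qfact_ne_zero r) (qfact_ne_zero u)) (qfact_ne_zero w)
  apply mul_right_cancel₀ hne
  have hL : qbinom (r+u+w) w * qbinom (r+u) r * (qfact r * qfact u * qfact w)
      = qfact (r+u+w) := by
    have e1 : r+u+w = w+(r+u) := by omega
    calc qbinom (r+u+w) w * qbinom (r+u) r * (qfact r * qfact u * qfact w)
        = qbinom (r+u+w) w * (qfact w * (qbinom (r+u) r * (qfact r * qfact u))) := by ring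
      _ = qbinom (r+u+w) w * (qfact w * qfact (r+u)) := by rw [fact_mul' r u]
      _ = qbinom (w+(r+u)) w * (qfact w * qfact (r+u)) := by rw [← e1]
      _ = qfact (w+(r+u)) := fact_mul' w (r+u)
      _ = qfact (r+u+w) := by rw [← e1]
  have hR : qbinom (r+u+w) u * qbinom (r+w) r * (qfact r * qfact u * qfact w)
      = qfact (r+u+w) := by
    have e1 : r+u+w = u+(r+w) := by omega
    calc qbinom (r+u+w) u * qbinom (r+w) r * (qfact r * qfact u * qfact w)
        = qbinom (r+u+w) u * (qfact u * (qbinom (r+w) r * (qfact r * qfact w))) := by ring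
      _ = qbinom (r+u+w) u * (qfact u * qfact (r+w)) := by rw [fact_mul' r w]
      _ = qbinom (u+(r+w)) u * (qfact u * qfact (r+w)) := by rw [← e1]
      _ = qfact (u+(r+w)) := fact_mul' u (r+w)
      _ = qfact (r+u+w) := by rw [← e1]
  rw [hL, hR]

lemma kp : ∀ N n m d r s j, n+m+(m+d) ≤ N → r + s ≤ m → j + 2*s + d + r ≤ n →
    NN (qbinom n (s+d) * qbinom m r - X^(d*j) * (qbinom n s * qbinom (m+d) r)) := by
  intro N
  induction N with
  | zero =>
    intro n m d r s j h1 h2 h3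
    have h0 : n = 0 ∧ m = 0 ∧ d = 0 ∧ r = 0 ∧ s = 0 ∧ j = 0 := by omega
    rcases h0 with ⟨rfl, rfl, rfl, rfl, rfl, rfl⟩
    exact nn_of_eq (by simp) nn_zero
  | succ N ih =>
    intro n m d r s j h1 h2 h3
    rcases r with _|r'
    · -- r = 0 : reduce to elem
      obtain ⟨q, rfl⟩ : ∃ q, n = 2*s+d+q := ⟨n-(2*s+d), by omega⟩
      rw [qb_zero m, qb_zero (m+d), mul_one, mul_one]
      exact elem (2*(2*s+d+q)+(s+d)) s d q (d*j) le_rfl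
        (Nat.mul_le_mul_left d (by omega))
    by_cases htight : (r'+1) + s = m
    · rcases s with _|s''
      · -- s = 0, so r = m : TOP case
        have hrm : r'+1 = m := by omega
        subst hrm
        rw [qb_self, mul_one, qb_zero, one_mul]
        have hsymm : qbinom ((r'+1)+d) (r'+1) = qbinom ((r'+1)+d) d := by
          have e1 : (r'+1)+d = (r'+1)+d := rfl
          calc qbinom ((r'+1)+d) (r'+1) = qbinom (d+(r'+1)) (r'+1) := by rw [Nat.add_comm (r'+1) d]
            _ = qbinom (d+(r'+1)) d := (qb_symm d (r'+1)).symm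
            _ = qbinom ((r'+1)+d) d := by rw [Nat.add_comm d (r'+1)]
        rw [hsymm]
        have e0 : (0:ℕ)+d = d := by omega
        rw [e0]
        exact top_pow j ((r'+1)+d) d n (by omega)
      · -- tight, s ≥ 1
        rcases j with _|j'
        · by_cases hbase : 2*(s''+1)+d+(r'+1) = n
          · -- base: tight identity
            refine nn_of_eq ?_ nn_zero
            have hm : m = (r'+1)+(s''+1) := by omega
            have hid := tight_id (r'+1) (s''+1) ((s''+1)+d)
            have e1 : (r'+1)+(s''+1)+((s''+1)+d) = n := by omega
            have e2 : (r'+1)+((s''+1)+d) = m+d := by omega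
            rw [e1, e2, ← hm] at hid
            rw [Nat.mul_zero, pow_zero, one_mul]
            rw [sub_eq_zero]
            exact hid
          · -- mirror-n descent
            obtain ⟨t, rfl⟩ : ∃ t, n = 2*(s''+1)+d+(r'+1)+1+t := ⟨n-(2*(s''+1)+d+(r'+1)+1), by omega⟩
            set n'' := 2*s''+d+r'+3+t with hn''
            have p1 := mirror' (2*(s''+1)+d+(r'+1)+1+t) ((s''+1)+d) n'' (s''+d) (s''+r'+3+t)
              (by omega) (by omega) (by omega)
            have p2 := mirror' (2*(s''+1)+d+(r'+1)+1+t) (s''+1) n'' s'' (s''+d+r'+3+t)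
              (by omega) (by omega) (by omega)
            rw [p1, p2]
            have c1 := ih n'' m d (r'+1) s'' 1 (by omega) (by omega) (by omega)
            have c2 := ih n'' m d (r'+1) (s''+1) 0 (by omega) (by omega) (by omega)
            refine nn_of_eq ?_ (nn_add (nn_mul (nn_X_pow (s''+r'+3+t)) c1) c2)
            have ed1 : d*1 = d := by ring
            have ed0 : d*0 = 0 := by ring
            rw [ed1, ed0] at *
            have exp1 : (s''+d+r'+3+t) = (s''+r'+3+t) + d := by omega
            rw [exp1, pow_add, pow_zero]
            ring
        · -- plain-n descent (j ≥ 1)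
          obtain ⟨n'', rfl⟩ : ∃ q, n = q+1 := ⟨n-1, by omega⟩
          have p1 := pascal' (n''+1) ((s''+1)+d) n'' (s''+d) rfl (by omega)
          have p2 := pascal' (n''+1) (s''+1) n'' s'' rfl rfl
          rw [p1, p2]
          have c1 := ih n'' m d (r'+1) s'' (j'+1) (by omega) (by omega) (by omega)
          have c2 := ih n'' m d (r'+1) (s''+1) j' (by omega) (by omega) (by omega)
          refine nn_of_eq ?_ (nn_add c1 (nn_mul (nn_X_pow ((s''+1)+d)) c2))
          have exp1 : d*(j'+1) = d*j' + d := by ring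
          rw [exp1]
          rw [pow_add, pow_add]
          ring
    · -- non-tight : plain Pascal on the r-binomials
      obtain ⟨m'', rfl⟩ : ∃ q, m = q+1 := ⟨m-1, by omega⟩
      have p1 := pascal' (m''+1) (r'+1) m'' r' rfl rfl
      have p2 := pascal' ((m''+1)+d) (r'+1) (m''+d) r' (by omega) rfl
      rw [p1, p2]
      have c1 := ih n m'' d r' s j (by omega) (by omega) (by omega)
      have c2 := ih n m'' d (r'+1) s j (by omega) (by omega) (by omega)
      refine nn_of_eq ?_ (nn_add c1 (nn_mul (nn_X_pow (r'+1)) c2))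
      ring

lemma vdm (m : ℕ) : ∀ n k, qbinom (m+n) k
    = ∑ j ∈ range (k+1), X^((m-j)*(k-j)) * (qbinom m j * qbinom n (k-j)) := by
  intro n
  induction n with
  | zero =>
    intro k
    rw [Finset.sum_eq_single_of_mem k (Finset.self_mem_range_succ k)]
    · simp [qb_zero]
    · intro j hj hne
      have hjk : j < k := by
        have := Finset.mem_range.mp hj; omega
      obtain ⟨u, hu⟩ : ∃ u, k - j = u+1 := ⟨k-j-1, by omega⟩
      rw [hu, qb_of_lt 0 (u+1) (by omega)]
      ring
  | succ n ih =>
    intro k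
    rcases k with _|k
    · simp [qb_zero]
    have eL : m+(n+1) = (m+n)+1 := by omega
    rw [eL, mirror' ((m+n)+1) (k+1) (m+n) k ((m+n)-k) rfl rfl rfl]
    set f : ℕ → Polynomial ℤ :=
      fun j => X^((m-j)*((k+1)-j)) * (qbinom m j * qbinom (n+1) ((k+1)-j)) with hf
    set g : ℕ → Polynomial ℤ :=
      fun j => X^((m-j)*(k-j)) * (qbinom m j * qbinom n (k-j)) with hg
    set h : ℕ → Polynomial ℤ :=
      fun j => X^((m-j)*((k+1)-j)) * (qbinom m j * qbinom n ((k+1)-j)) with hh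
    have termsplit : ∀ j ∈ range (k+1), f j = X^((m+n)-k) * g j + h j := by
      intro j hj
      have hjk : j ≤ k := by have := Finset.mem_range.mp hj; omega
      by_cases hjm : j ≤ m
      · by_cases hkn : k - j ≤ n
        · obtain ⟨α, hα⟩ := Nat.le.dest hjm   -- j + α = m
          obtain ⟨β, hβ⟩ := Nat.le.dest hjk   -- j + β = k
          have hβn : β ≤ n := by omega
          obtain ⟨ν, hν⟩ := Nat.le.dest hβn   -- β + ν = n
          have e1 : (k+1)-j = (k-j)+1 := by omega
          rw [hf, hh, hg]
          simp only
          rw [e1, mirror' (n+1) ((k-j)+1) n (k-j) (n-(k-j)) rfl rfl rfl]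
          have e2 : k - j = β := by omega
          have e3 : m - j = α := by omega
          have e4 : n - β = ν := by omega
          have e5 : (m+n)-k = α + ν := by omega
          rw [e2, e3, e4, e5]
          have e6 : α*(β+1) = α*β + α := by ring
          rw [e6]
          rw [pow_add, pow_add]
          ring
        · -- n < k - j : everything vanishes
          have z1 : qbinom (n+1) ((k+1)-j) = 0 := qb_of_lt _ _ (by omega)
          have z2 : qbinom n (k-j) = 0 := qb_of_lt _ _ (by omega)
          have z3 : qbinom n ((k+1)-j) = 0 := qb_of_lt _ _ (by omega)
          rw [hf, hh, hg]; simp only [z1, z2, z3]; ring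
      · -- m < j
        have z1 : qbinom m j = 0 := qb_of_lt _ _ (by omega)
        rw [hf, hh, hg]; simp only [z1]; ring
    have hlast : f (k+1) = h (k+1) := by
      rw [hf, hh]
      simp only
      have e1 : (k+1)-(k+1) = 0 := by omega
      rw [e1, qb_zero, qb_zero]
    refine Eq.symm ?_
    calc (∑ j ∈ range (k+1+1), f j)
        = (∑ j ∈ range (k+1), f j) + f (k+1) := Finset.sum_range_succ f (k+1)
      _ = (∑ j ∈ range (k+1), (X^((m+n)-k) * g j + h j)) + f (k+1) :=
          by rw [Finset.sum_congr rfl termsplit]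
      _ = X^((m+n)-k) * (∑ j ∈ range (k+1), g j) + ((∑ j ∈ range (k+1), h j) + h (k+1)) := by
          rw [Finset.sum_add_distrib, Finset.mul_sum, hlast]; ring
      _ = X^((m+n)-k) * (∑ j ∈ range (k+1), g j) + (∑ j ∈ range (k+1+1), h j) := by
          rw [Finset.sum_range_succ h (k+1)]
      _ = X^((m+n)-k) * qbinom (m+n) k + qbinom (m+n) (k+1) := by
          rw [← ih k, ← ih (k+1)]

lemma qb_symm' (n a b : ℕ) (h : n = a + b) : qbinom n a = qbinom n b := by
  subst h; exact qb_symm a b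

lemma master (a d : ℕ) : NN (qbinom (3*a+d) (a+d) - qbinom (3*a+2*d) a) := by
  -- first binomial as a Vandermonde sum
  have h1 : qbinom (3*a+d) (a+d) = ∑ t ∈ range (a+1),
      X^(((2*a+d)-(a+t))*((2*a)-(a+t))) * (qbinom (2*a+d) (a+t) * qbinom a (2*a-(a+t))) := by
    rw [qb_symm' (3*a+d) (a+d) (2*a) (by omega)]
    rw [show 3*a+d = (2*a+d)+a from by omega, vdm (2*a+d) a (2*a)]
    rw [show 2*a+1 = a + (a+1) from by omega, Finset.sum_range_add]
    have hz : (∑ j ∈ range a,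
        X^(((2*a+d)-j)*(2*a-j)) * (qbinom (2*a+d) j * qbinom a (2*a-j))) = 0 := by
      apply Finset.sum_eq_zero
      intro j hj
      have hja : j < a := Finset.mem_range.mp hj
      rw [qb_of_lt a (2*a-j) (by omega)]
      ring
    rw [hz, zero_add]
  have h2 : qbinom (3*a+2*d) a = ∑ t ∈ range (a+1),
      X^(((2*a+d)-((a+d)+t))*((2*a+2*d)-((a+d)+t)))
        * (qbinom (2*a+d) ((a+d)+t) * qbinom (a+d) ((2*a+2*d)-((a+d)+t))) := by
    rw [qb_symm' (3*a+2*d) a (2*a+2*d) (by omega)]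
    rw [show 3*a+2*d = (2*a+d)+(a+d) from by omega, vdm (2*a+d) (a+d) (2*a+2*d)]
    rw [show 2*a+2*d+1 = (a+d) + ((a+d)+1) from by omega, Finset.sum_range_add]
    have hz : (∑ j ∈ range (a+d),
        X^(((2*a+d)-j)*((2*a+2*d)-j)) * (qbinom (2*a+d) j * qbinom (a+d) ((2*a+2*d)-j))) = 0 := by
      apply Finset.sum_eq_zero
      intro j hj
      have hja : j < a+d := Finset.mem_range.mp hj
      rw [qb_of_lt (a+d) ((2*a+2*d)-j) (by omega)]
      ring
    rw [hz, zero_add]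
    rw [show (a+d)+1 = (a+1) + d from by omega, Finset.sum_range_add]
    have hz2 : (∑ u ∈ range d,
        X^(((2*a+d)-((a+d)+((a+1)+u)))*((2*a+2*d)-((a+d)+((a+1)+u))))
          * (qbinom (2*a+d) ((a+d)+((a+1)+u)) * qbinom (a+d) ((2*a+2*d)-((a+d)+((a+1)+u))))) = 0 := by
      apply Finset.sum_eq_zero
      intro u hu
      rw [qb_of_lt (2*a+d) ((a+d)+((a+1)+u)) (by omega)]
      ring
    rw [hz2, add_zero]
  rw [h1, h2, ← Finset.sum_sub_distrib]
  apply nn_sum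
  intro t ht
  have hta : t ≤ a := by have := Finset.mem_range.mp ht; omega
  obtain ⟨τ, hτ⟩ := Nat.le.dest hta   -- t + τ = a
  have e1 : (2*a+d)-(a+t) = τ+d := by omega
  have e2 : (2*a)-(a+t) = τ := by omega
  have e3 : (2*a+d)-((a+d)+t) = τ := by omega
  have e4 : (2*a+2*d)-((a+d)+t) = τ+d := by omega
  rw [e1, e2, e3, e4]
  have s1 : qbinom (2*a+d) (a+t) = qbinom (2*a+d) (τ+d) := qb_symm' _ _ _ (by omega)
  have s2 : qbinom a τ = qbinom a t := qb_symm' _ _ _ (by omega)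
  have s3 : qbinom (2*a+d) ((a+d)+t) = qbinom (2*a+d) τ := qb_symm' _ _ _ (by omega)
  have s4 : qbinom (a+d) (τ+d) = qbinom (a+d) t := qb_symm' _ _ _ (by omega)
  rw [s1, s2, s3, s4]
  have hkp := kp ((2*a+d)+a+(a+d)) (2*a+d) a d t τ 0 le_rfl (by omega) (by omega)
  have hX := nn_mul (nn_X_pow ((τ+d)*τ)) hkp
  refine nn_of_eq ?_ hX
  rw [Nat.mul_zero, pow_zero]
  have e5 : (τ+d)*τ = τ*(τ+d) := by ring
  rw [e5]
  ring

/-- The `β = 2` case of the β-Conjecture: for positive integers `a`, `i`, the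
polynomial `P(q) = [3a+i choose a+i]_q − [3a+2i choose a]_q` has non-negative
coefficients; equivalently, for `0 < a < b`, the inequality
`[b+2a choose b]_q ≥ [a+2b choose a]_q` holds coefficientwise. -/
theorem bergeron_beta_two :
    (∀ a i : ℕ, 0 < a → 0 < i →
      ∀ m : ℕ, 0 ≤ (qbinom (3 * a + i) (a + i) - qbinom (3 * a + 2 * i) a).coeff m) ∧
    (∀ a b : ℕ, 0 < a → a < b →
      ∀ m : ℕ, 0 ≤ (qbinom (b + 2 * a) b - qbinom (a + 2 * b) a).coeff m) := by
  constructor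
  · intro a i _ _ m
    exact master a i m
  · intro a b _ hab m
    obtain ⟨d, rfl⟩ := Nat.le.dest (Nat.le_of_lt hab)
    rw [show a+d+2*a = 3*a+d from by omega, show a+2*(a+d) = 3*a+2*d from by omega]
    exact master a d m
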